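/- Let y ~ N(ȳ, Σ_y) be a d-dimensional Gaussian with positive definite covariance, with ȳᵢ ≤ 0 for all i, and let rᵢ = −ȳᵢ/σᵢ where σᵢ = √((Σ_y)ᵢᵢ). Then 1 − P(yᵢ ≤ 0 for all i) ≤ Ψ_d(min_i rᵢ), where Ψ_d(r) = 1 − Φ_d(r²) and Φ_d is the chi-squared CDF with d degrees of freedom. -/

import Mathlib

open MeasureTheory ProbabilityTheory Matrix Real

noncomputable def mvGaussian {d : ℕ} (m : Fin d → ℝ) (S : Matrix (Fin d) (Fin d) ℝ)
    (hS : S.PosDef) : Measure (Fin d → ℝ) :=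
  (Measure.pi fun _ : Fin d => gaussianReal 0 1).map
    (fun z => m + ((hS.posSemidef.1.eigenvectorUnitary : Matrix (Fin d) (Fin d) ℝ) *
      diagonal (Real.sqrt ∘ hS.posSemidef.1.eigenvalues) *
      (star hS.posSemidef.1.eigenvectorUnitary : Matrix (Fin d) (Fin d) ℝ)).mulVec z)

noncomputable def stdNormalCDF (x : ℝ) : ℝ := cdf (gaussianReal 0 1) x

noncomputable def stdNormalQuantile (p : ℝ) : ℝ := Function.invFun stdNormalCDF p

noncomputable def chiSqCDF (d : ℕ) (x : ℝ) : ℝ := cdf (gammaMeasure (d / 2) (1 / 2)) x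

noncomputable def chiSqQuantile (d : ℕ) (p : ℝ) : ℝ := Function.invFun (chiSqCDF d) p

noncomputable def PsiInv (d : ℕ) (β : ℝ) : ℝ := Real.sqrt (chiSqQuantile d (1 - β))

noncomputable def Psi (d : ℕ) (r : ℝ) : ℝ := 1 - chiSqCDF d (r ^ 2)

noncomputable def lambdaMax {d : ℕ} (S : Matrix (Fin d) (Fin d) ℝ) (hS : S.IsHermitian) : ℝ :=
  ⨆ i, hS.eigenvalues i

noncomputable def regIncBeta (a b x : ℝ) : ℝ :=
  (∫ t in (0:ℝ)..x, t ^ (a - 1) * (1 - t) ^ (b - 1)) /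
    (∫ t in (0:ℝ)..1, t ^ (a - 1) * (1 - t) ^ (b - 1))

noncomputable def calI (d : ℕ) (x : ℝ) : ℝ :=
  regIncBeta ((d - 1 : ℝ) / 2) (1 / 2) (Real.sqrt (1 - x))

/-!
Write `y = ȳ + Q z` with `Q = √Σ_y` symmetric and `z` standard normal. The `i`-th row of `Q` has
norm `σᵢ`, so Cauchy–Schwarz gives `(Q z)ᵢ ≤ σᵢ ‖z‖`: the ball `‖z‖ ≤ min rᵢ` is mapped into the
safe set `{y ⪯ 0}`, and its probability is `Φ_d((min rᵢ)²)` because `‖z‖²` is `χ²_d`.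

The `χ²_d` law of `‖z‖²` is obtained without computing any normalising constant: polar
coordinates for the Gaussian, and the substitution `t = y²` for `Gamma(d/2, 1/2)`, show that both
laws are multiples of the same measure, and probability measures that are multiples of each other
coincide.
-/

open Set
open scoped ENNReal

namespace MeasureTheory

section ProductDensity

variable {X : Type*} [MeasurableSpace X]

theorem lintegral_fin_nat_prod_eq_prod {n : ℕ} (μ : Fin n → Measure X) [∀ i, SigmaFinite (μ i)]
    {f : Fin n → X → ℝ≥0∞} (hf : ∀ i, Measurable (f i)) :
    ∫⁻ z, ∏ i, f i (z i) ∂Measure.pi μ = ∏ i, ∫⁻ x, f i x ∂μ i := by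
  induction n with
  | zero => simp
  | succ n ih =>
    have hsplit (p : X × (Fin n → X)) :
        ∏ i, f i ((MeasurableEquiv.piFinSuccAbove (fun _ => X) 0).symm p i)
          = f 0 p.1 * ∏ i : Fin n, f i.succ (p.2 i) := by
      simp [MeasurableEquiv.piFinSuccAbove_symm_apply, Fin.insertNthEquiv, Fin.prod_univ_succ]
    have hm : Measurable fun z : Fin (n + 1) → X => ∏ i, f i (z i) := by fun_prop
    have hm' : Measurable fun z : Fin n → X => ∏ i, f i.succ (z i) := by fun_prop
    rw [← (measurePreserving_piFinSuccAbove μ 0).symm.lintegral_comp hm]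
    simp_rw [hsplit]
    rw [lintegral_prod_mul (hf 0).aemeasurable hm'.aemeasurable]
    simp_rw [Fin.zero_succAbove]
    rw [ih _ fun i => hf i.succ, Fin.prod_univ_succ]

theorem Measure.pi_withDensity {n : ℕ} (μ : Fin n → Measure X) [∀ i, SigmaFinite (μ i)]
    {f : Fin n → X → ℝ≥0∞} (hf : ∀ i, Measurable (f i))
    [∀ i, SigmaFinite ((μ i).withDensity (f i))] :
    Measure.pi (fun i => (μ i).withDensity (f i))
      = (Measure.pi μ).withDensity fun z => ∏ i, f i (z i) := by
  refine Measure.pi_eq fun s hs => ?_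
  have hbox (z : Fin n → X) : (univ.pi s).indicator (fun z => ∏ i, f i (z i)) z
      = ∏ i, (s i).indicator (f i) (z i) := by
    by_cases hz : z ∈ univ.pi s
    · simp [indicator_of_mem hz, indicator_of_mem (hz _ (mem_univ _))]
    · obtain ⟨i, hi⟩ : ∃ i, z i ∉ s i := by simpa [Set.mem_pi] using hz
      rw [indicator_of_notMem hz]
      exact (Finset.prod_eq_zero (Finset.mem_univ i) (indicator_of_notMem hi _)).symm
  rw [withDensity_apply _ (.univ_pi hs), ← lintegral_indicator (.univ_pi hs)]
  simp_rw [hbox]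
  rw [lintegral_fin_nat_prod_eq_prod μ fun i => (hf i).indicator (hs i)]
  simp_rw [lintegral_indicator (hs _), withDensity_apply _ (hs _)]

end ProductDensity

theorem Measure.eq_of_measureReal_eq_mul {α : Type*} [MeasurableSpace α] {μ ν : Measure α}
    [IsProbabilityMeasure μ] [IsProbabilityMeasure ν] (I : Set α → ℝ) {a b : ℝ}
    (hμ : ∀ s, MeasurableSet s → μ.real s = a * I s)
    (hν : ∀ s, MeasurableSet s → ν.real s = b * I s) : μ = ν := by
  have ha : a * I univ = 1 := by simpa using (hμ univ .univ).symm
  have hb : b * I univ = 1 := by simpa using (hν univ .univ).symm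
  have hab : a = b := mul_right_cancel₀ (right_ne_zero_of_mul_eq_one ha) (ha.trans hb.symm)
  ext s hs
  rw [← ENNReal.toReal_eq_toReal_iff' (measure_ne_top μ s) (measure_ne_top ν s)]
  exact (hμ s hs).trans (hab ▸ (hν s hs).symm)

end MeasureTheory

namespace ProbabilityTheory

theorem pi_gaussianReal_eq_withDensity (d : ℕ) :
    Measure.pi (fun _ : Fin d => gaussianReal 0 1) = volume.withDensity
      fun z => ENNReal.ofReal ((√(2 * π))⁻¹ ^ d * exp (-(∑ i, z i ^ 2) / 2)) := by
  have hpdf (x : ℝ) : gaussianPDFReal 0 1 x = (√(2 * π))⁻¹ * exp (-x ^ 2 / 2) := by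
    simp [gaussianPDFReal_def]
  have : SigmaFinite (volume.withDensity (gaussianPDF 0 1)) := by
    rw [← gaussianReal_of_var_ne_zero 0 one_ne_zero]; infer_instance
  simp_rw [gaussianReal_of_var_ne_zero 0 one_ne_zero, volume_pi]
  rw [Measure.pi_withDensity _ fun _ => measurable_gaussianPDF 0 1]
  congr 1
  funext z
  rw [gaussianPDF_def, ← ENNReal.ofReal_prod_of_nonneg fun i _ => gaussianPDFReal_nonneg 0 1 (z i)]
  simp_rw [hpdf, Finset.prod_mul_distrib, Finset.prod_const, ← exp_sum, Finset.card_univ,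
    Fintype.card_fin]
  rw [← Finset.sum_neg_distrib, Finset.sum_div]

theorem measureReal_pi_gaussianReal_sum_sq_mem {d : ℕ} (hd : 0 < d) {s : Set ℝ}
    (hs : MeasurableSet s) :
    (Measure.pi fun _ : Fin d => gaussianReal 0 1).real {z | ∑ i, z i ^ 2 ∈ s}
      = (√(2 * π))⁻¹ ^ d * d * (volume : Measure (EuclideanSpace ℝ (Fin d))).real (Metric.ball 0 1)
        * ∫ y in Ioi 0, ((· ^ 2) ⁻¹' s).indicator (fun y => y ^ (d - 1) * exp (-y ^ 2 / 2)) y := by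
  have : Nonempty (Fin d) := Fin.pos_iff_nonempty.mp hd
  set φ : ℝ → ℝ := s.indicator fun u => (√(2 * π))⁻¹ ^ d * exp (-u / 2)
  have hmeas : MeasurableSet {z : Fin d → ℝ | ∑ i, z i ^ 2 ∈ s} :=
    measurableSet_preimage (by fun_prop) hs
  calc (Measure.pi fun _ : Fin d => gaussianReal 0 1).real {z | ∑ i, z i ^ 2 ∈ s}
      = ∫ z : Fin d → ℝ, φ (∑ i, z i ^ 2) := by
        rw [← integral_indicator_one hmeas, pi_gaussianReal_eq_withDensity,
          integral_withDensity_eq_integral_toReal_smul (by fun_prop)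
            (ae_of_all _ fun _ => ENNReal.ofReal_lt_top)]
        congr 1
        funext z
        by_cases hz : ∑ i, z i ^ 2 ∈ s
        · simp only [φ, indicator_of_mem hz,
            indicator_of_mem (show z ∈ {z | ∑ i, z i ^ 2 ∈ s} from hz)]
          simp only [Pi.one_apply, smul_eq_mul, mul_one]
          exact ENNReal.toReal_ofReal (by positivity)
        · simp [φ, hz]
    _ = ∫ x : EuclideanSpace ℝ (Fin d), φ (‖x‖ ^ 2) := by
        rw [← (EuclideanSpace.volume_preserving_symm_measurableEquiv_toLp (Fin d)).integral_comp']
        simp [EuclideanSpace.norm_sq_eq]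
    _ = _ := by
        rw [integral_fun_norm_addHaar volume fun y => φ (y ^ 2), finrank_euclideanSpace_fin,
          nsmul_eq_mul, smul_eq_mul, ← integral_const_mul, ← integral_const_mul,
          ← integral_const_mul]
        refine setIntegral_congr_fun measurableSet_Ioi fun y _ => ?_
        by_cases hy : y ^ 2 ∈ s <;> simp [φ, hy]
        ring

theorem measureReal_gammaMeasure {a r : ℝ} (ha : 0 < a) (hr : 0 < r) {s : Set ℝ}
    (hs : MeasurableSet s) :
    (gammaMeasure a r).real s = 2 * r ^ a / Gamma a
      * ∫ y in Ioi 0,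
          ((· ^ 2) ⁻¹' s).indicator (fun y => y ^ (2 * a - 1) * exp (-(r * y ^ 2))) y := by
  calc (gammaMeasure a r).real s
      = ∫ t in Ioi 0, s.indicator (gammaPDFReal a r) t := by
        rw [← integral_indicator_one hs, gammaMeasure,
          integral_withDensity_eq_integral_toReal_smul (f := gammaPDF a r)
            (measurable_gammaPDFReal a r).ennreal_ofReal
            (ae_of_all _ fun _ => ENNReal.ofReal_lt_top), ← integral_Ici_eq_integral_Ioi,
          setIntegral_eq_integral_of_forall_compl_eq_zero]
        · congr 1
          funext t
          by_cases ht : t ∈ s <;> simp [ht, gammaPDF, gammaPDFReal_nonneg ha hr]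
        · intro t ht
          simp [gammaPDFReal, show ¬ 0 ≤ t from ht]
    _ = ∫ y in Ioi 0, (2 * y ^ ((2 : ℝ) - 1)) • s.indicator (gammaPDFReal a r) (y ^ (2 : ℝ)) :=
        (integral_comp_rpow_Ioi_of_pos two_pos).symm
    _ = _ := by
        rw [← integral_const_mul]
        refine setIntegral_congr_fun measurableSet_Ioi fun y (hy : 0 < y) => ?_
        rw [show (2 : ℝ) - 1 = 1 by norm_num, rpow_one, rpow_two]
        by_cases hys : y ^ 2 ∈ s
        · have hpow : y * (y ^ 2) ^ (a - 1) = y ^ (2 * a - 1) := by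
            rw [← rpow_natCast, ← rpow_mul hy.le, mul_comm, ← rpow_add_one hy.ne']
            congr 1
            push_cast
            ring
          simp [hys, gammaPDFReal, hy.le, ← hpow]
          ring
        · simp [hys]

theorem map_pi_gaussianReal_sum_sq {d : ℕ} (hd : 0 < d) :
    (Measure.pi fun _ : Fin d => gaussianReal 0 1).map (fun z => ∑ i, z i ^ 2)
      = gammaMeasure (d / 2) (1 / 2) := by
  have hd2 : (0 : ℝ) < d / 2 := by positivity
  have := isProbabilityMeasure_gammaMeasure hd2 one_half_pos
  have hmeas : Measurable fun z : Fin d → ℝ => ∑ i, z i ^ 2 := by fun_prop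
  have := Measure.isProbabilityMeasure_map
    (μ := Measure.pi fun _ : Fin d => gaussianReal 0 1) hmeas.aemeasurable
  refine Measure.eq_of_measureReal_eq_mul (b := 2 * (1 / 2) ^ ((d : ℝ) / 2) / Gamma (d / 2))
    (fun s => ∫ y in Ioi 0, ((· ^ 2) ⁻¹' s).indicator (fun y => y ^ (d - 1) * exp (-y ^ 2 / 2)) y)
    (fun s hs => (map_measureReal_apply hmeas hs).trans
      (measureReal_pi_gaussianReal_sum_sq_mem hd hs))
    (fun s hs => (measureReal_gammaMeasure hd2 one_half_pos hs).trans ?_)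
  have hexp : 2 * ((d : ℝ) / 2) - 1 = ((d - 1 : ℕ) : ℝ) := by
    rw [Nat.cast_sub hd]
    push_cast
    ring
  simp only [hexp, rpow_natCast, one_div_mul_eq_div, neg_div]

end ProbabilityTheory

theorem chiSqCDF_eq_measureReal {d : ℕ} (hd : 0 < d) (c : ℝ) :
    chiSqCDF d c = (Measure.pi fun _ : Fin d => gaussianReal 0 1).real {z | ∑ i, z i ^ 2 ≤ c} := by
  have := isProbabilityMeasure_gammaMeasure (a := d / 2) (by positivity) one_half_pos
  rw [chiSqCDF, cdf_eq_real, ← map_pi_gaussianReal_sum_sq hd,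
    map_measureReal_apply (by fun_prop) measurableSet_Iic]
  rfl

theorem mvGaussian_eq_map {d : ℕ} (m : Fin d → ℝ) (S : Matrix (Fin d) (Fin d) ℝ) (hS : S.PosDef) :
    mvGaussian m S hS
      = (Measure.pi fun _ : Fin d => gaussianReal 0 1).map fun z => m + cfc Real.sqrt S *ᵥ z := by
  rw [mvGaussian, hS.posSemidef.1.cfc_eq]
  rfl

theorem Matrix.PosSemidef.cfc_sqrt_mul_transpose {n : Type*} [Fintype n] [DecidableEq n]
    {S : Matrix n n ℝ} (hS : S.PosSemidef) : cfc Real.sqrt S * (cfc Real.sqrt S)ᵀ = S := by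
  have hsa : IsSelfAdjoint (cfc Real.sqrt S) := cfc_predicate (R := ℝ) Real.sqrt S
  rw [← conjTranspose_eq_transpose_of_trivial, ← star_eq_conjTranspose, hsa.star_eq, ← cfc_mul ..]
  conv_rhs => rw [← cfc_id ℝ S hS.isHermitian]
  refine cfc_congr fun x hx => Real.mul_self_sqrt ?_
  exact (posSemidef_iff_isHermitian_and_spectrum_nonneg.1 hS).2 hx

theorem Matrix.mulVec_apply_le_sqrt_mul_sqrt {m n : Type*} [Fintype n] (A : Matrix m n ℝ)
    (z : n → ℝ) (i : m) : (A *ᵥ z) i ≤ √((A * Aᵀ) i i) * √(∑ j, z j ^ 2) := by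
  simpa [mulVec, dotProduct, mul_apply, sq] using Real.sum_mul_le_sqrt_mul_sqrt Finset.univ (A i) z

theorem stmt7 {d : ℕ} (hd : 0 < d) (ybar : Fin d → ℝ) (S : Matrix (Fin d) (Fin d) ℝ)
    (hS : S.PosDef) (hy : ∀ i, ybar i ≤ 0) :
    1 - ((mvGaussian ybar S hS) {v | ∀ i, v i ≤ 0}).toReal
      ≤ Psi d (⨅ i, -ybar i / Real.sqrt (S i i)) := by
  have : Nonempty (Fin d) := Fin.pos_iff_nonempty.mp hd
  set r := ⨅ i, -ybar i / √(S i i)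
  have hr : 0 ≤ r := le_ciInf fun i => div_nonneg (neg_nonneg.2 (hy i)) (sqrt_nonneg _)
  have hri (i : Fin d) : √(S i i) * r ≤ -ybar i := by
    rw [← le_div_iff₀' (sqrt_pos.2 hS.diag_pos)]
    exact ciInf_le
      ⟨0, forall_mem_range.2 fun j => div_nonneg (neg_nonneg.2 (hy j)) (sqrt_nonneg _)⟩ i
  have hball : {z : Fin d → ℝ | ∑ i, z i ^ 2 ≤ r ^ 2}
      ⊆ (fun z => ybar + cfc Real.sqrt S *ᵥ z) ⁻¹' {v | ∀ i, v i ≤ 0} := by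
    intro z hz i
    have hQz := (cfc Real.sqrt S).mulVec_apply_le_sqrt_mul_sqrt z i
    rw [hS.posSemidef.cfc_sqrt_mul_transpose] at hQz
    have hzr : √(∑ j, z j ^ 2) ≤ r := (sqrt_le_left hr).2 hz
    show ybar i + (cfc Real.sqrt S *ᵥ z) i ≤ 0
    linarith [hri i, mul_le_mul_of_nonneg_left hzr (sqrt_nonneg (S i i))]
  have hle : chiSqCDF d (r ^ 2) ≤ (mvGaussian ybar S hS).real {v | ∀ i, v i ≤ 0} := by
    rw [chiSqCDF_eq_measureReal hd, mvGaussian_eq_map,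
      map_measureReal_apply (by fun_prop) (by measurability)]
    exact measureReal_mono hball
  rw [Psi]
  linarith [measureReal_def (mvGaussian ybar S hS) {v | ∀ i, v i ≤ 0}]
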